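/- arXiv:2009.02450 — 6 statements merged into one kernel-verified Lean document; each statement's English description precedes it below -/
import Mathlib

section
/- Let n ≥ 1 be an integer, let k > 0 and ε be real numbers with k + ε > 0, and let a₀ be a real number. Suppose f : ℝ → ℝ has Hilbert-series Laurent coefficients (a₀, a₀) of order n at s = 0. Define g(s) = f(s)·(1 − e^{−k s})/(1 − e^{−(k+ε) s}) for s > 0. Then g has Hilbert-series Laurent coefficients (a₀·k/(k+ε), a₀·k·(ε+2)/(2(k+ε))) of order n at s = 0. -/
/-! The factor `h(s) = (1 - e^{-ks}) / (1 - e^{-(k+ε)s})` satisfies `h(s) → c := k/(k+ε)` and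
`(h(s) - c)/s → c' := kε/(2(k+ε))` as `s → 0⁺` (second-order expansion of `exp`, by l'Hôpital).
For any such `h`, the identity `s^{n-1}(f h - a₀ c/sⁿ) = s^{n-1}(f - a₀/sⁿ) h + a₀ (h - c)/s`
shows that multiplying by `h` turns Laurent coefficients `(a₀, a₁)` into `(a₀ c, a₁ c + a₀ c')`;
with `a₁ = a₀` the second one is `a₀ k (ε + 2)/(2(k+ε))`. -/

/-- `f` has Hilbert-series Laurent coefficients `(a₀, a₁)` of order `n` at `s = 0`:
`sⁿ·f(s) → a₀` and `sⁿ⁻¹·(f(s) − a₀/sⁿ) → a₁` as `s → 0⁺`. -/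
def HSLaurentCoeffs (f : ℝ → ℝ) (n : ℕ) (a₀ a₁ : ℝ) : Prop :=
  Filter.Tendsto (fun s => s ^ n * f s) (nhdsWithin 0 (Set.Ioi 0)) (nhds a₀) ∧
  Filter.Tendsto (fun s => s ^ (n - 1) * (f s - a₀ / s ^ n))
    (nhdsWithin 0 (Set.Ioi 0)) (nhds a₁)

open Filter Real Topology

theorem tendsto_one_sub_exp_neg_mul_div (c : ℝ) :
    Tendsto (fun s => (1 - exp (-(c * s))) / s) (𝓝[≠] 0) (𝓝 c) := by
  have hderiv : HasDerivAt (fun s => 1 - exp (-(c * s))) c 0 := by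
    simpa using (((hasDerivAt_id (0 : ℝ)).const_mul c).neg.exp).const_sub 1
  simpa [div_eq_inv_mul] using hasDerivAt_iff_tendsto_slope_zero.mp hderiv

theorem tendsto_exp_neg_mul_sub_one_add_mul_div_sq (c : ℝ) :
    Tendsto (fun s => (exp (-(c * s)) - 1 + c * s) / s ^ 2) (𝓝[≠] 0) (𝓝 (c ^ 2 / 2)) := by
  have hnum (s : ℝ) : HasDerivAt (fun s => exp (-(c * s)) - 1 + c * s)
      (c * (1 - exp (-(c * s)))) s := by
    have h := ((hasDerivAt_const_mul (x := s) (-c)).exp.sub_const 1).fun_add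
      (hasDerivAt_const_mul c)
    simp only [neg_mul] at h
    exact h.congr_deriv (by ring)
  have hden (s : ℝ) : HasDerivAt (fun s : ℝ => s ^ 2) (2 * s) s := by
    simpa using hasDerivAt_pow 2 s
  refine HasDerivAt.lhopital_zero_nhdsNE (.of_forall hnum) (.of_forall hden)
    (eventually_nhdsWithin_of_forall fun s hs => mul_ne_zero two_ne_zero hs) ?_ ?_ ?_
  · exact tendsto_nhdsWithin_of_tendsto_nhds
      ((by fun_prop : Continuous fun s => exp (-(c * s)) - 1 + c * s).tendsto' 0 0 (by simp))
  · exact tendsto_nhdsWithin_of_tendsto_nhds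
      ((continuous_pow 2).tendsto' (0 : ℝ) 0 (by simp))
  · convert (tendsto_one_sub_exp_neg_mul_div c).const_mul (c / 2) using 2 with s
    · field_simp
    · ring

theorem tendsto_one_sub_exp_neg_mul_ratio_slope (k : ℝ) {d : ℝ} (hd : d ≠ 0) :
    Tendsto (fun s => ((1 - exp (-(k * s))) / (1 - exp (-(d * s))) - k / d) / s) (𝓝[≠] 0)
      (𝓝 (k * (d - k) / (2 * d))) := by
  -- d(1 - e^{-ks}) - k(1 - e^{-ds}) = -d(e^{-ks} - 1 + ks) + k(e^{-ds} - 1 + ds)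
  have hnum := ((tendsto_exp_neg_mul_sub_one_add_mul_div_sq k).const_mul (-d)).add
    ((tendsto_exp_neg_mul_sub_one_add_mul_div_sq d).const_mul k)
  have hden := (tendsto_one_sub_exp_neg_mul_div d).const_mul d
  have hlim : (-d * (k ^ 2 / 2) + k * (d ^ 2 / 2)) / (d * d) = k * (d - k) / (2 * d) := by
    field_simp
    ring
  rw [← hlim]
  refine (hnum.div hden (mul_ne_zero hd hd)).congr' ?_
  filter_upwards [self_mem_nhdsWithin] with s (hs : s ≠ 0)
  have hD : 1 - exp (-(d * s)) ≠ 0 :=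
    sub_ne_zero.mpr (Ne.symm ((exp_eq_one_iff _).not.mpr (by simp [hd, hs])))
  simp only [Pi.div_apply]
  field_simp
  ring

theorem HSLaurentCoeffs.mul_of_tendsto_slope {f h : ℝ → ℝ} {n : ℕ} {a₀ a₁ c c' : ℝ}
    (hn : 1 ≤ n) (hf : HSLaurentCoeffs f n a₀ a₁)
    (hh : Tendsto (fun s => (h s - c) / s) (𝓝[>] 0) (𝓝 c')) :
    HSLaurentCoeffs (fun s => f s * h s) n (a₀ * c) (a₁ * c + a₀ * c') := by
  have hhc : Tendsto h (𝓝[>] 0) (𝓝 c) := by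
    have := (tendsto_nhdsWithin_of_tendsto_nhds tendsto_id).mul hh |>.const_add c
    rw [zero_mul, add_zero] at this
    refine this.congr' ?_
    filter_upwards [self_mem_nhdsWithin] with s (hs : 0 < s)
    rw [id, mul_div_cancel₀ _ hs.ne', add_sub_cancel]
  refine ⟨?_, ?_⟩
  · simpa only [mul_assoc] using hf.1.mul hhc
  · refine (hf.2.mul hhc |>.add (hh.const_mul a₀)).congr' ?_
    filter_upwards [self_mem_nhdsWithin] with s (hs : 0 < s)
    obtain ⟨m, rfl⟩ := Nat.exists_eq_add_of_le' hn
    simp only [Nat.add_sub_cancel]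
    field_simp
    ring

theorem hs_coeffs_of_single_test_symmetry_general
    (n : ℕ) (hn : 1 ≤ n) (k ε a₀ : ℝ) (hkε : 0 < k + ε)
    (f : ℝ → ℝ) (hf : HSLaurentCoeffs f n a₀ a₀) :
    HSLaurentCoeffs
      (fun s => f s * (1 - Real.exp (-(k * s))) / (1 - Real.exp (-((k + ε) * s))))
      n (a₀ * k / (k + ε)) (a₀ * k * (ε + 2) / (2 * (k + ε))) := by
  have hslope := (tendsto_one_sub_exp_neg_mul_ratio_slope k hkε.ne').mono_left
    (nhdsWithin_mono 0 fun s (hs : 0 < s) => hs.ne')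
  convert hf.mul_of_tendsto_slope hn hslope using 1
  · simp only [mul_div_assoc]
  · ring
  · field_simp
    ring

/-- Multiplying a Hilbert series with equal Laurent coefficients `(a₀, a₀)` by
`(1 − e^{−ks})/(1 − e^{−(k+ε)s})` yields Laurent coefficients
`(a₀k/(k+ε), a₀k(ε+2)/(2(k+ε)))`. -/
theorem hs_coeffs_of_single_test_symmetry
    (n : ℕ) (hn : 1 ≤ n) (k ε a₀ : ℝ) (hk : 0 < k) (hkε : 0 < k + ε)
    (f : ℝ → ℝ) (hf : HSLaurentCoeffs f n a₀ a₀) :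
    HSLaurentCoeffs
      (fun s => f s * (1 - Real.exp (-(k * s))) / (1 - Real.exp (-((k + ε) * s))))
      n (a₀ * k / (k + ε)) (a₀ * k * (ε + 2) / (2 * (k + ε))) :=
  hs_coeffs_of_single_test_symmetry_general n hn k ε a₀ hkε f hf
end

section
/- Let n and m be positive integers with n ≥ 2, let k₁,…,k_m > 0 and v₁,…,v_m be real numbers, and let a₀ ≠ 0 be a real number. Define A₀(ε) = a₀·∏_{i=1}^m k_i/(k_i + v_i ε) for ε near 0, and set b₀ = −(1/n)·A₀'(0) and c₀ = (1/(n(n+1)))·A₀''(0). Then c₀ − b₀²/a₀ = ((n−1)·a₀/(n²(n+1)))·( ∑_{i=1}^m v_i²/k_i² − (2/(n−1))·∑_{1 ≤ j < l ≤ m} v_j v_l/(k_j k_l) ). -/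
/-!
Logarithmic differentiation gives `A₀'/A₀ = -∑ vᵢ/(kᵢ + vᵢε)`, so with `S = ∑ vᵢ/kᵢ` and
`Q = ∑ vᵢ²/kᵢ²` one gets `A₀'(0) = -a₀S` and `A₀''(0) = a₀(S² + Q)`. Hence
`c₀ - b₀²/a₀ = a₀(nQ - S²)/(n²(n+1))`, and expanding `S² = Q + 2∑_{j<l} vⱼvₗ/(kⱼkₗ)` gives the formula.
-/

open Finset Filter Topology

theorem Finset.sq_sum_eq_sum_sq_add_two_mul_sum_Ioi {α R : Type*} [Fintype α] [LinearOrder α]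
    [LocallyFiniteOrderTop α] [LocallyFiniteOrderBot α] [CommSemiring R] (f : α → R) :
    (∑ i, f i) ^ 2 = ∑ i, f i ^ 2 + 2 * ∑ i, ∑ j ∈ Ioi i, f i * f j := by
  classical
  calc (∑ i, f i) ^ 2 = ∑ i, (f i ^ 2 + ∑ j ∈ {i}ᶜ, f i * f j) := by
        rw [sq, sum_mul]
        refine sum_congr rfl fun i _ => ?_
        rw [Fintype.sum_eq_add_sum_compl i, mul_add, mul_sum, sq]
    _ = ∑ i, f i ^ 2 + ∑ i, ∑ j ∈ Ioi i, (f i * f j + f j * f i) := by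
        rw [sum_add_distrib, sum_sum_Ioi_add_eq_sum_sum_off_diag fun j i => f i * f j]
    _ = ∑ i, f i ^ 2 + 2 * ∑ i, ∑ j ∈ Ioi i, f i * f j := by
        simp_rw [mul_comm (f _) (f _), two_mul, sum_add_distrib]

theorem HasDerivAt.finsetProd_of_eq_mul {ι 𝕜 : Type*} [NontriviallyNormedField 𝕜] {s : Finset ι}
    {f : ι → 𝕜 → 𝕜} {g : ι → 𝕜} {x : 𝕜} (hf : ∀ i ∈ s, HasDerivAt (f i) (f i x * g i) x) :
    HasDerivAt (∏ i ∈ s, f i ·) ((∏ i ∈ s, f i x) * ∑ i ∈ s, g i) x := by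
  classical
  refine (HasDerivAt.fun_finsetProd hf).congr_deriv ?_
  rw [mul_sum]
  refine sum_congr rfl fun i hi => ?_
  rw [← mul_prod_erase s _ hi, smul_eq_mul]
  ring

theorem hasDerivAt_div_linear (c k v ε : ℝ) (h : k + v * ε ≠ 0) :
    HasDerivAt (fun x => c / (k + v * x)) (c / (k + v * ε) * -(v / (k + v * ε))) ε := by
  have hlin : HasDerivAt (fun x => k + v * x) v ε := by
    simpa using ((hasDerivAt_id ε).const_mul v).const_add k
  refine ((hasDerivAt_const ε c).fun_div hlin h).congr_deriv ?_
  field_simp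
  ring

section ProdDivLinear

variable {ι : Type*} {s : Finset ι} {k : ι → ℝ} (v : ι → ℝ)

theorem hasDerivAt_prod_div_linear {ε : ℝ} (h : ∀ i ∈ s, k i + v i * ε ≠ 0) :
    HasDerivAt (fun x => ∏ i ∈ s, k i / (k i + v i * x))
      ((∏ i ∈ s, k i / (k i + v i * ε)) * ∑ i ∈ s, -(v i / (k i + v i * ε))) ε :=
  HasDerivAt.finsetProd_of_eq_mul fun i hi => hasDerivAt_div_linear _ _ _ _ (h i hi)

theorem prod_div_linear_zero (hk : ∀ i ∈ s, k i ≠ 0) :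
    ∏ i ∈ s, k i / (k i + v i * 0) = 1 :=
  prod_eq_one fun i hi => by rw [mul_zero, add_zero, div_self (hk i hi)]

theorem deriv_prod_div_linear_zero (hk : ∀ i ∈ s, k i ≠ 0) :
    deriv (fun x => ∏ i ∈ s, k i / (k i + v i * x)) 0 = -∑ i ∈ s, v i / k i := by
  have h0 : ∀ i ∈ s, k i + v i * 0 ≠ 0 := by simpa using hk
  rw [(hasDerivAt_prod_div_linear v h0).deriv, prod_div_linear_zero v hk, one_mul,
    sum_neg_distrib]
  simp only [mul_zero, add_zero]

theorem deriv_deriv_prod_div_linear_zero (hk : ∀ i ∈ s, k i ≠ 0) :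
    deriv (deriv fun x => ∏ i ∈ s, k i / (k i + v i * x)) 0
      = (∑ i ∈ s, v i / k i) ^ 2 + ∑ i ∈ s, (v i / k i) ^ 2 := by
  have h0 : ∀ i ∈ s, k i + v i * 0 ≠ 0 := by simpa using hk
  have near_zero : ∀ᶠ ε in 𝓝 (0 : ℝ), ∀ i ∈ s, k i + v i * ε ≠ 0 :=
    (eventually_all_finset s).2 fun i hi =>
      (continuous_const.add (continuous_const.mul continuous_id)).continuousAt.eventually_ne
        (h0 i hi)
  have hderiv : deriv (fun x => ∏ i ∈ s, k i / (k i + v i * x)) =ᶠ[𝓝 0]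
      fun x => (∏ i ∈ s, k i / (k i + v i * x)) * ∑ i ∈ s, -(v i / (k i + v i * x)) :=
    near_zero.mono fun ε hε => (hasDerivAt_prod_div_linear v hε).deriv
  have hlog : HasDerivAt (fun x => ∑ i ∈ s, -(v i / (k i + v i * x)))
      (∑ i ∈ s, -(v i / (k i + v i * 0) * -(v i / (k i + v i * 0)))) 0 :=
    HasDerivAt.fun_sum fun i hi => (hasDerivAt_div_linear _ _ _ _ (h0 i hi)).neg
  rw [hderiv.deriv_eq, ((hasDerivAt_prod_div_linear v h0).fun_mul hlog).deriv,
    prod_div_linear_zero v hk]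
  simp [sq]

end ProdDivLinear

theorem norm_squared_general_test_symmetry_general
    (n m : ℕ) (hn : 2 ≤ n) (k v : Fin m → ℝ) (hk : ∀ i, 0 < k i)
    (a₀ : ℝ) :
    (1 / ((n : ℝ) * ((n : ℝ) + 1)))
        * deriv (deriv (fun ε => a₀ * ∏ i, k i / (k i + v i * ε))) 0
      - (-(1 / (n : ℝ)) * deriv (fun ε => a₀ * ∏ i, k i / (k i + v i * ε)) 0) ^ 2 / a₀
      = (((n : ℝ) - 1) * a₀ / ((n : ℝ) ^ 2 * ((n : ℝ) + 1)))
        * ((∑ i, v i ^ 2 / k i ^ 2)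
           - (2 / ((n : ℝ) - 1)) * ∑ j, ∑ l ∈ Finset.Ioi j, v j * v l / (k j * k l)) := by
  have hk₀ : ∀ i ∈ univ, k i ≠ 0 := fun i _ => (hk i).ne'
  have hn₁ : (n : ℝ) - 1 ≠ 0 := by
    have : (2 : ℝ) ≤ n := by exact_mod_cast hn
    linarith
  simp only [deriv_const_mul_field']
  rw [deriv_deriv_prod_div_linear_zero v hk₀, deriv_prod_div_linear_zero v hk₀]
  have hS := sq_sum_eq_sum_sq_add_two_mul_sum_Ioi fun i => v i / k i
  simp only [div_pow, div_mul_div_comm] at hS ⊢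
  generalize ∑ i, v i / k i = S at hS ⊢
  have hb : (-(1 / (n : ℝ)) * (a₀ * -S)) ^ 2 / a₀ = a₀ * (S / n) ^ 2 := by
    rw [show (-(1 / (n : ℝ)) * (a₀ * -S)) ^ 2 = a₀ * a₀ * (S / n) ^ 2 by ring,
      mul_div_right_comm, mul_self_div_self]
  rw [hb, div_pow, hS]
  field_simp
  ring

/-- For `A₀(ε) = a₀·∏ᵢ kᵢ/(kᵢ+vᵢε)`, with `b₀ = −(1/n)A₀'(0)` and
`c₀ = (1/(n(n+1)))A₀''(0)`, the norm squared `c₀ − b₀²/a₀` equals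
`((n−1)a₀/(n²(n+1)))·(∑ᵢ vᵢ²/kᵢ² − (2/(n−1))∑_{j<l} vⱼvₗ/(kⱼkₗ))`. -/
theorem norm_squared_general_test_symmetry
    (n m : ℕ) (hn : 2 ≤ n) (hm : 1 ≤ m) (k v : Fin m → ℝ) (hk : ∀ i, 0 < k i)
    (a₀ : ℝ) (ha : a₀ ≠ 0) :
    (1 / ((n : ℝ) * ((n : ℝ) + 1)))
        * deriv (deriv (fun ε => a₀ * ∏ i, k i / (k i + v i * ε))) 0
      - (-(1 / (n : ℝ)) * deriv (fun ε => a₀ * ∏ i, k i / (k i + v i * ε)) 0) ^ 2 / a₀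
      = (((n : ℝ) - 1) * a₀ / ((n : ℝ) ^ 2 * ((n : ℝ) + 1)))
        * ((∑ i, v i ^ 2 / k i ^ 2)
           - (2 / ((n : ℝ) - 1)) * ∑ j, ∑ l ∈ Finset.Ioi j, v j * v l / (k j * k l)) :=
  norm_squared_general_test_symmetry_general n m hn k v hk a₀
end

section
/- Let ε > −1 be a real number and define f(s) = (1 − e^{−2s})/((1 − e^{−s})³·(1 − e^{−(1+ε)s})) for s > 0. Then f has Hilbert-series Laurent coefficients (2/(1+ε), (2+ε)/(1+ε)) of order 3 at s = 0; i.e., s³·f(s) → 2/(1+ε) and s²·(f(s) − 2/((1+ε)s³)) → (2+ε)/(1+ε) as s → 0⁺. -/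
open Real Filter Topology Asymptotics

noncomputable def oneSubExpNegDiv (x : ℝ) : ℝ := if x = 0 then 1 else (1 - exp (-x)) / x

@[simp]
theorem oneSubExpNegDiv_zero : oneSubExpNegDiv 0 = 1 := if_pos rfl

theorem oneSubExpNegDiv_of_ne_zero {x : ℝ} (hx : x ≠ 0) :
    oneSubExpNegDiv x = (1 - exp (-x)) / x :=
  if_neg hx

theorem mul_oneSubExpNegDiv {x : ℝ} (hx : x ≠ 0) : x * oneSubExpNegDiv x = 1 - exp (-x) := by
  rw [oneSubExpNegDiv_of_ne_zero hx, mul_div_cancel₀ _ hx]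

theorem oneSubExpNegDiv_pos (x : ℝ) : 0 < oneSubExpNegDiv x := by
  rcases lt_trichotomy x 0 with hx | rfl | hx
  · rw [oneSubExpNegDiv_of_ne_zero hx.ne]
    exact div_pos_of_neg_of_neg (by simpa using one_lt_exp_iff.2 (neg_pos.2 hx)) hx
  · simp
  · rw [oneSubExpNegDiv_of_ne_zero hx.ne']
    exact div_pos (by simpa using exp_lt_one_iff.2 (neg_neg_of_pos hx)) hx

theorem abs_oneSubExpNegDiv_sub_le {x : ℝ} (hx : |x| ≤ 1) :
    |oneSubExpNegDiv x - (1 - x / 2)| ≤ x ^ 2 := by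
  rcases eq_or_ne x 0 with rfl | hx0
  · simp
  have hexp := exp_bound (x := -x) (by rwa [abs_neg]) (n := 3) (by norm_num)
  have htaylor : ∑ m ∈ Finset.range 3, (-x) ^ m / m.factorial = 1 - x + x ^ 2 / 2 := by
    simp only [Finset.sum_range_succ, Finset.sum_range_zero, Nat.factorial]
    push_cast
    ring
  have hdiff : oneSubExpNegDiv x - (1 - x / 2) = -(exp (-x) - (1 - x + x ^ 2 / 2)) / x := by
    rw [oneSubExpNegDiv_of_ne_zero hx0]; field_simp; ring
  rw [hdiff, abs_div, abs_neg, div_le_iff₀ (abs_pos.2 hx0), ← htaylor]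
  calc _ ≤ |x| ^ 3 * (4 / (6 * 3)) := by simpa [Nat.factorial] using hexp
    _ ≤ x ^ 2 * |x| := by rw [pow_succ, sq_abs]; nlinarith [abs_nonneg x, sq_nonneg x]

theorem hasDerivAt_oneSubExpNegDiv : HasDerivAt oneSubExpNegDiv (-(1 / 2)) 0 := by
  rw [hasDerivAt_iff_isLittleO]
  have hbigO : (fun x => oneSubExpNegDiv x - oneSubExpNegDiv 0 - (x - 0) * (-(1 / 2))) =O[𝓝 0]
      fun x : ℝ => x ^ 2 := by
    refine isBigO_iff.2 ⟨1, ?_⟩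
    filter_upwards [Metric.closedBall_mem_nhds (0 : ℝ) one_pos] with x hx
    rw [Metric.mem_closedBall, dist_zero_right, norm_eq_abs] at hx
    rw [oneSubExpNegDiv_zero, one_mul, norm_eq_abs, norm_eq_abs, abs_sq]
    convert abs_oneSubExpNegDiv_sub_le hx using 2
    ring
  simpa using hbigO.trans_isLittleO (isLittleO_pow_id one_lt_two)

theorem hasDerivAt_oneSubExpNegDiv_const_mul (c : ℝ) :
    HasDerivAt (fun s => oneSubExpNegDiv (c * s)) (-(c / 2)) 0 := by
  have hE : HasDerivAt oneSubExpNegDiv (-(1 / 2)) (c * 0) := by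
    rw [mul_zero]; exact hasDerivAt_oneSubExpNegDiv
  exact (hE.comp 0 ((hasDerivAt_id' 0).const_mul c)).congr_deriv (by ring)

theorem HSLaurentCoeffs.of_hasDerivWithinAt {f G : ℝ → ℝ} {n : ℕ} {a₁ : ℝ} (hn : n ≠ 0)
    (hG : HasDerivWithinAt G a₁ (Set.Ioi 0) 0) (hfG : ∀ᶠ s in 𝓝[>] 0, s ^ n * f s = G s) :
    HSLaurentCoeffs f n (G 0) a₁ := by
  refine ⟨hG.continuousWithinAt.tendsto.congr' (hfG.mono fun s hs => hs.symm), ?_⟩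
  refine ((hasDerivWithinAt_iff_tendsto_slope' (lt_irrefl 0)).1 hG).congr' ?_
  filter_upwards [hfG, self_mem_nhdsWithin] with s hs (hs0 : 0 < s)
  obtain ⟨m, rfl⟩ : ∃ m, n = m + 1 := ⟨n - 1, by omega⟩
  rw [slope_def_field, sub_zero, ← hs, Nat.add_sub_cancel, pow_succ]
  field_simp

/-- The Hilbert series of the conifold with test symmetry giving charge `ε` to `z`,
`f(s) = (1 − e^{−2s})/((1 − e^{−s})³(1 − e^{−(1+ε)s}))`, has Laurent coefficients
`(2/(1+ε), (2+ε)/(1+ε))` of order 3. -/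
theorem conifold_test_symmetry_hs_coeffs (ε : ℝ) (hε : -1 < ε) :
    HSLaurentCoeffs
      (fun s => (1 - Real.exp (-(2 * s)))
        / ((1 - Real.exp (-s)) ^ 3 * (1 - Real.exp (-((1 + ε) * s)))))
      3 (2 / (1 + ε)) ((2 + ε) / (1 + ε)) := by
  have hε₀ : 1 + ε ≠ 0 := by linarith
  let E := oneSubExpNegDiv
  let G s := 2 * E (2 * s) / ((1 + ε) * E s ^ 3 * E ((1 + ε) * s))
  have hG0 : G 0 = 2 / (1 + ε) := by simp [G, E]
  have hG : HasDerivAt G ((2 + ε) / (1 + ε)) 0 := by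
    refine (((hasDerivAt_oneSubExpNegDiv_const_mul 2).const_mul 2).div
      (((hasDerivAt_oneSubExpNegDiv.pow 3).const_mul (1 + ε)).mul
        (hasDerivAt_oneSubExpNegDiv_const_mul (1 + ε))) (by simpa using hε₀)).congr_deriv ?_
    simp only [Pi.mul_apply, Pi.pow_apply, mul_zero, oneSubExpNegDiv_zero, one_pow, mul_one]
    field_simp
    ring
  rw [← hG0]
  refine HSLaurentCoeffs.of_hasDerivWithinAt three_ne_zero hG.hasDerivWithinAt
    (eventually_nhdsWithin_of_forall fun s (hs : 0 < s) => ?_)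
  have h1ε : (1 + ε) * s ≠ 0 := mul_ne_zero hε₀ hs.ne'
  rw [← mul_oneSubExpNegDiv hs.ne', ← mul_oneSubExpNegDiv (by positivity : 2 * s ≠ 0),
    ← mul_oneSubExpNegDiv h1ε]
  have hEs := (oneSubExpNegDiv_pos s).ne'
  have hEεs := (oneSubExpNegDiv_pos ((1 + ε) * s)).ne'
  dsimp only [G, E]
  field_simp
end

section
/- For every natural number n ≥ 1, the function f(s) = (1 − e^{−(4n+4)s/(n+3)})/((1 − e^{−4s/(n+3)})·(1 − e^{−(2n+2)s/(n+3)})³), defined for s > 0, has Hilbert-series Laurent coefficients (a₀, a₁) of order 3 at s = 0 with a₀ = a₁ = (n+3)³/(8(n+1)²). -/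
open Filter Real Set Topology

lemma tendsto_scale {k : ℝ} (hk : 0 < k) :
    Tendsto (fun s : ℝ => k * s) (𝓝[>] 0) (𝓝[>] 0) := by
  rw [tendsto_nhdsWithin_iff]
  constructor
  · have h : Tendsto (fun s : ℝ => k * s) (𝓝 0) (𝓝 (k * 0)) :=
      (continuous_const.mul continuous_id).tendsto 0
    simpa using h.mono_left nhdsWithin_le_nhds
  · filter_upwards [self_mem_nhdsWithin] with s hs
    exact mul_pos hk hs

lemma tendsto_exp_quad :
    Tendsto (fun x : ℝ => (Real.exp (-x) - 1 + x) / x ^ 2) (𝓝[>] 0) (𝓝 (1/2)) := by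
  have h0 : Tendsto (fun x : ℝ => (Real.exp (-x) - 1 + x) / x ^ 2 - 1/2) (𝓝[>] 0) (𝓝 0) := by
    apply squeeze_zero_norm' (a := fun x : ℝ => 2/9 * x)
    · filter_upwards [Ioo_mem_nhdsGT (by norm_num : (0:ℝ) < 1)] with x hx
      obtain ⟨hx0, hx1⟩ := hx
      have hb := Real.exp_bound (x := -x) (by rw [abs_neg, abs_of_pos hx0]; linarith)
        (by norm_num : 0 < 3)
      have hsum : ∑ m ∈ Finset.range 3, (-x) ^ m / (Nat.factorial m : ℝ) = 1 - x + x^2/2 := by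
        rw [Finset.sum_range_succ, Finset.sum_range_succ, Finset.sum_range_succ,
          Finset.sum_range_zero]
        norm_num [Nat.factorial]
        ring
      rw [hsum] at hb
      have heq : (Real.exp (-x) - 1 + x) / x ^ 2 - 1/2
          = (Real.exp (-x) - (1 - x + x^2/2)) / x^2 := by
        field_simp
        ring
      rw [heq, norm_div, Real.norm_eq_abs, Real.norm_eq_abs,
        abs_of_pos (by positivity : (0:ℝ) < x^2), div_le_iff₀ (by positivity : (0:ℝ) < x^2)]
      calc |Real.exp (-x) - (1 - x + x^2/2)| ≤ |(-x)|^3 * (((3:ℕ).succ:ℝ)/((Nat.factorial 3)*3)) := hb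
        _ = 2/9 * x * x^2 := by
            rw [abs_neg, abs_of_pos hx0]; norm_num [Nat.factorial]; ring
    · have h : Tendsto (fun x : ℝ => 2/9 * x) (𝓝 0) (𝓝 (2/9 * 0)) :=
        (continuous_const.mul continuous_id).tendsto 0
      simpa using h.mono_left nhdsWithin_le_nhds
  have h1 := h0.add_const (1/2)
  simpa using h1

def DP (h : ℝ → ℝ) (α β : ℝ) : Prop :=
  Tendsto h (𝓝[>] (0:ℝ)) (𝓝 α) ∧
  Tendsto (fun s => (h s - α) / s) (𝓝[>] (0:ℝ)) (𝓝 β)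

lemma DP.mul {h g : ℝ → ℝ} {α β γ δ : ℝ} (H : DP h α β) (G : DP g γ δ) :
    DP (fun s => h s * g s) (α * γ) (α * δ + γ * β) := by
  refine ⟨H.1.mul G.1, ?_⟩
  have key : Tendsto (fun s => h s * ((g s - γ)/s) + γ * ((h s - α)/s)) (𝓝[>] (0:ℝ))
      (𝓝 (α * δ + γ * β)) := (H.1.mul G.2).add (tendsto_const_nhds.mul H.2)
  refine key.congr fun s => ?_
  by_cases hs : s = 0
  · simp [hs]
  · field_simp
    ring

lemma DP_num {k : ℝ} (hk : 0 < k) :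
    DP (fun s => (1 - Real.exp (-(k * s))) / s) k (-(k^2)/2) := by
  have hA : Tendsto (fun s : ℝ => (Real.exp (-(k*s)) - 1 + k*s) / (k*s)^2)
      (𝓝[>] 0) (𝓝 (1/2)) := tendsto_exp_quad.comp (tendsto_scale hk)
  have hk0 : k ≠ 0 := ne_of_gt hk
  constructor
  · have h : Tendsto (fun s : ℝ => k - k^2 * s * ((Real.exp (-(k*s)) - 1 + k*s) / (k*s)^2))
        (𝓝[>] 0) (𝓝 (k - k^2 * 0 * (1/2))) :=
      tendsto_const_nhds.sub
        (((tendsto_const_nhds.mul (tendsto_id.mono_right nhdsWithin_le_nhds)).mul hA))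
    have heq : (fun s : ℝ => k - k^2 * s * ((Real.exp (-(k*s)) - 1 + k*s) / (k*s)^2))
        =ᶠ[𝓝[>] (0:ℝ)] fun s => (1 - Real.exp (-(k * s))) / s := by
      filter_upwards [self_mem_nhdsWithin] with s hs
      have hs0 : s ≠ 0 := ne_of_gt hs
      field_simp
      ring
    have h2 := Tendsto.congr' heq h
    simpa using h2
  · have h : Tendsto (fun s : ℝ => -(k^2) * ((Real.exp (-(k*s)) - 1 + k*s) / (k*s)^2))
        (𝓝[>] 0) (𝓝 (-(k^2) * (1/2))) := tendsto_const_nhds.mul hA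
    have heq : (fun s : ℝ => -(k^2) * ((Real.exp (-(k*s)) - 1 + k*s) / (k*s)^2))
        =ᶠ[𝓝[>] (0:ℝ)] fun s => ((1 - Real.exp (-(k * s))) / s - k) / s := by
      filter_upwards [self_mem_nhdsWithin] with s hs
      have hs0 : s ≠ 0 := ne_of_gt hs
      field_simp
      ring
    have h2 := Tendsto.congr' heq h
    have he : -(k^2) * (1/2) = -(k^2)/2 := by ring
    rw [he] at h2
    exact h2

lemma DP_den {k : ℝ} (hk : 0 < k) :
    DP (fun s => s / (1 - Real.exp (-(k * s)))) (1/k) (1/2) := by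
  have hA : Tendsto (fun s : ℝ => (Real.exp (-(k*s)) - 1 + k*s) / (k*s)^2)
      (𝓝[>] 0) (𝓝 (1/2)) := tendsto_exp_quad.comp (tendsto_scale hk)
  have hk0 : k ≠ 0 := ne_of_gt hk
  have hu : ∀ s : ℝ, 0 < s → 0 < 1 - Real.exp (-(k*s)) := by
    intro s hs
    have : Real.exp (-(k*s)) < 1 := Real.exp_lt_one_iff.mpr (by nlinarith)
    linarith
  have hnum := DP_num hk
  have h1 : Tendsto (fun s => s / (1 - Real.exp (-(k * s)))) (𝓝[>] (0:ℝ)) (𝓝 (1/k)) := by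
    have h := hnum.1.inv₀ hk0
    have heq : (fun s : ℝ => ((1 - Real.exp (-(k * s))) / s)⁻¹)
        =ᶠ[𝓝[>] (0:ℝ)] fun s => s / (1 - Real.exp (-(k * s))) := by
      filter_upwards [self_mem_nhdsWithin] with s hs
      rw [inv_div]
    have h2 := Tendsto.congr' heq h
    simpa [one_div] using h2
  refine ⟨h1, ?_⟩
  have h : Tendsto (fun s : ℝ => ((Real.exp (-(k*s)) - 1 + k*s) / (k*s)^2)
      * (k * (s / (1 - Real.exp (-(k*s)))))) (𝓝[>] 0) (𝓝 ((1/2) * (k * (1/k)))) :=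
    hA.mul (tendsto_const_nhds.mul h1)
  have heq : (fun s : ℝ => ((Real.exp (-(k*s)) - 1 + k*s) / (k*s)^2)
      * (k * (s / (1 - Real.exp (-(k*s))))))
      =ᶠ[𝓝[>] (0:ℝ)] fun s => (s / (1 - Real.exp (-(k * s))) - 1/k) / s := by
    filter_upwards [self_mem_nhdsWithin] with s hs
    have hs0 : s ≠ 0 := ne_of_gt hs
    have hu0 : 1 - Real.exp (-(k*s)) ≠ 0 := ne_of_gt (hu s hs)
    field_simp
    ring
  have h2 := Tendsto.congr' heq h
  have he : (1/2) * (k * (1/k)) = (1/2 : ℝ) := by field_simp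
  rw [he] at h2
  exact h2

lemma DP.congr_consts {h : ℝ → ℝ} {α β α' β' : ℝ} (H : DP h α β)
    (e1 : α' = α) (e2 : β' = β) : DP h α' β' := by rw [e1, e2]; exact H


set_option maxHeartbeats 1600000 in
/-- The Hilbert series of the `A_n` threefold `w² + x² + y² + z^{n+1} = 0` has Laurent
coefficients `a₀ = a₁ = (n+3)³/(8(n+1)²)` of order 3. -/
theorem A_type_threefold_hs_coeffs (n : ℕ) (hn : 1 ≤ n) :
    HSLaurentCoeffs
      (fun s => (1 - Real.exp (-((4 * (n : ℝ) + 4) * s / ((n : ℝ) + 3))))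
        / ((1 - Real.exp (-(4 * s / ((n : ℝ) + 3))))
           * (1 - Real.exp (-((2 * (n : ℝ) + 2) * s / ((n : ℝ) + 3)))) ^ 3))
      3 (((n : ℝ) + 3) ^ 3 / (8 * ((n : ℝ) + 1) ^ 2))
        (((n : ℝ) + 3) ^ 3 / (8 * ((n : ℝ) + 1) ^ 2)) := by
  have hN1 : (1:ℝ) ≤ (n:ℝ) := by exact_mod_cast hn
  set N : ℝ := (n : ℝ) with hNdef
  have h3 : N + 3 ≠ 0 := by positivity
  have h1 : N + 1 ≠ 0 := by positivity
  have hN0 : 0 ≤ N := by linarith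
  have hapos : 0 < (4*N+4)/(N+3) := by positivity
  have hbpos : 0 < 4/(N+3) := by positivity
  have hcpos : 0 < (2*N+2)/(N+3) := by positivity
  have hP := DP_num hapos
  have hQ := DP_den hbpos
  have hR := DP_den hcpos
  have hF := (((hP.mul hQ).mul hR).mul hR).mul hR
  set a₀ : ℝ := (N + 3) ^ 3 / (8 * (N + 1) ^ 2) with ha₀
  have hF' := hF.congr_consts (α' := a₀) (β' := a₀) ?_ ?_
  · -- eventual equalities with target
    have hu2 : ∀ s : ℝ, 0 < s → 0 < 1 - Real.exp (-(4 * s / (N + 3))) := by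
      intro s hs
      have : Real.exp (-(4 * s / (N + 3))) < 1 := Real.exp_lt_one_iff.mpr (by
        have : 0 < 4 * s / (N+3) := by positivity
        linarith)
      linarith
    have hu3 : ∀ s : ℝ, 0 < s → 0 < 1 - Real.exp (-((2*N+2) * s / (N + 3))) := by
      intro s hs
      have : Real.exp (-((2*N+2) * s / (N + 3))) < 1 := Real.exp_lt_one_iff.mpr (by
        have : 0 < (2*N+2) * s / (N+3) := by positivity
        linarith)
      linarith
    have e1 : ∀ s : ℝ, (4*N+4)/(N+3) * s = (4*N+4) * s / (N+3) := fun s => by ring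
    have e2 : ∀ s : ℝ, 4/(N+3) * s = 4 * s / (N+3) := fun s => by ring
    have e3 : ∀ s : ℝ, (2*N+2)/(N+3) * s = (2*N+2) * s / (N+3) := fun s => by ring
    constructor
    · refine Tendsto.congr' ?_ hF'.1
      filter_upwards [self_mem_nhdsWithin] with s hs
      have hs0 : s ≠ 0 := ne_of_gt hs
      simp only [e1, e2, e3]
      have d2 := ne_of_gt (hu2 s hs)
      have d3 := ne_of_gt (hu3 s hs)
      field_simp
    · refine Tendsto.congr' ?_ hF'.2
      filter_upwards [self_mem_nhdsWithin] with s hs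
      have hs0 : s ≠ 0 := ne_of_gt hs
      simp only [e1, e2, e3]
      have d2 := ne_of_gt (hu2 s hs)
      have d3 := ne_of_gt (hu3 s hs)
      have key : ∀ y : ℝ, s ^ (3-1) * (y - a₀ / s^3) = (s^3*y - a₀)/s := by
        intro y
        norm_num
        field_simp
      rw [key]
      congr 1
      congr 1
      field_simp
  · rw [ha₀]
    field_simp
    ring
  · rw [ha₀]
    field_simp
    ring
end

section
/- The function f(s) = (1 − e^{−18s/5})/((1 − e^{−9s/5})²·(1 − e^{−6s/5})·(1 − e^{−4s/5})), defined for s > 0, has Hilbert-series Laurent coefficients (a₀, a₁) of order 3 at s = 0 with a₀ = a₁ = 125/108. -/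
open Filter Real Set


noncomputable def Ef (a s : ℝ) : ℝ := 1 - Real.exp (-(a * s / 5))
noncomputable def Vf (a s : ℝ) : ℝ := Ef a s / (a * s / 5)
noncomputable def Wf (a s : ℝ) : ℝ := (Ef a s - a * s / 5) / (a / 5 * s ^ 2)

lemma Ef_pos {a s : ℝ} (ha : 0 < a) (hs : 0 < s) : 0 < Ef a s := by
  have h : Real.exp (-(a * s / 5)) < 1 := by
    rw [Real.exp_lt_one_iff]
    nlinarith
  simp only [Ef]; linarith

lemma expA : Tendsto (fun x : ℝ => (Real.exp x - 1 - x) / x ^ 2)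
    (nhdsWithin 0 {(0:ℝ)}ᶜ) (nhds (1/2)) := by
  rw [← tendsto_sub_nhds_zero_iff]
  apply squeeze_zero_norm' (a := fun x : ℝ => |x| * (2/9))
  · have h1 : ∀ᶠ x : ℝ in nhdsWithin 0 {(0:ℝ)}ᶜ, |x| ≤ 1 := by
      have : ∀ᶠ x : ℝ in nhds 0, |x| ≤ 1 := by
        filter_upwards [Metric.ball_mem_nhds (0:ℝ) one_pos] with x hx
        rw [Metric.mem_ball, Real.dist_eq, sub_zero] at hx; exact le_of_lt hx
      exact this.filter_mono nhdsWithin_le_nhds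
    filter_upwards [self_mem_nhdsWithin, h1] with x hx hx1
    have hx0 : x ≠ 0 := hx
    have hx2 : (0:ℝ) < x ^ 2 := by positivity
    have h := Real.exp_bound hx1 (n := 3) (by norm_num)
    have hsum : (∑ i ∈ Finset.range 3, x ^ i / (Nat.factorial i : ℝ))
        = 1 + x + x ^ 2 / 2 := by
      norm_num [Finset.sum_range_succ, Nat.factorial]
    rw [hsum] at h
    have hb : |Real.exp x - (1 + x + x ^ 2 / 2)| ≤ |x| ^ 3 * (2/9) := by
      convert h using 2
      norm_num [Nat.factorial]
    have e1 : (Real.exp x - 1 - x) / x ^ 2 - 1/2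
        = (Real.exp x - (1 + x + x ^ 2 / 2)) / x ^ 2 := by
      field_simp; ring
    rw [Real.norm_eq_abs, e1, abs_div, abs_of_pos hx2, div_le_iff₀ hx2]
    calc |Real.exp x - (1 + x + x ^ 2 / 2)| ≤ |x| ^ 3 * (2/9) := hb
      _ = |x| * (2/9) * x ^ 2 := by rw [pow_succ' |x| 2, sq_abs]; ring
  · have : Tendsto (fun x : ℝ => |x| * (2/9)) (nhds 0) (nhds 0) := by
      have := (continuous_abs.tendsto (0:ℝ)).mul_const (2/9 : ℝ)
      simpa using this
    exact this.mono_left nhdsWithin_le_nhds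

lemma tendsto_Wf {a : ℝ} (ha : 0 < a) :
    Tendsto (Wf a) (nhdsWithin 0 (Ioi 0)) (nhds (-a/10)) := by
  have hmap : Tendsto (fun s : ℝ => -(a * s / 5)) (nhdsWithin 0 (Ioi 0))
      (nhdsWithin 0 {(0:ℝ)}ᶜ) := by
    rw [tendsto_nhdsWithin_iff]
    constructor
    · have hc : Continuous fun s : ℝ => -(a * s / 5) := by continuity
      have := (hc.tendsto 0).mono_left (nhdsWithin_le_nhds (s := Ioi (0:ℝ)))
      simpa using this
    · filter_upwards [self_mem_nhdsWithin] with s hs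
      have hs' : (0:ℝ) < s := hs
      have : 0 < a * s / 5 := by positivity
      simp only [Set.mem_compl_iff, Set.mem_singleton_iff]
      intro h
      rw [neg_eq_zero] at h
      linarith
  have hcomp := expA.comp hmap
  have h2 : Tendsto (fun s : ℝ =>
      -(a/5) * ((Real.exp (-(a * s / 5)) - 1 - (-(a * s / 5))) / (-(a * s / 5)) ^ 2))
      (nhdsWithin 0 (Ioi 0)) (nhds (-(a/5) * (1/2))) := hcomp.const_mul _
  have heq : ∀ᶠ s in nhdsWithin (0:ℝ) (Ioi 0),
      -(a/5) * ((Real.exp (-(a * s / 5)) - 1 - (-(a * s / 5))) / (-(a * s / 5)) ^ 2)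
        = Wf a s := by
    filter_upwards [self_mem_nhdsWithin] with s hs
    have hs' : (0:ℝ) < s := hs
    have hs0 : s ≠ 0 := ne_of_gt hs'
    have ha0 : a ≠ 0 := ne_of_gt ha
    simp only [Wf, Ef]
    field_simp
    ring
  have := h2.congr' heq
  convert this using 2
  ring

lemma tendsto_Vf {a : ℝ} (ha : 0 < a) :
    Tendsto (Vf a) (nhdsWithin 0 (Ioi 0)) (nhds 1) := by
  have hs : Tendsto (fun s : ℝ => s) (nhdsWithin 0 (Ioi 0)) (nhds 0) :=
    (continuous_id.tendsto 0).mono_left nhdsWithin_le_nhds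
  have h := (hs.mul (tendsto_Wf ha)).const_add (1:ℝ)
  have heq : ∀ᶠ s in nhdsWithin (0:ℝ) (Ioi 0), 1 + s * Wf a s = Vf a s := by
    filter_upwards [self_mem_nhdsWithin] with s hss
    have hs0 : s ≠ 0 := ne_of_gt hss
    have ha0 : a ≠ 0 := ne_of_gt ha
    simp only [Wf, Vf, Ef]
    field_simp
    ring
  have := h.congr' heq
  simpa using this

lemma Vf_eq {a s : ℝ} (ha : a ≠ 0) (hs : s ≠ 0) : Vf a s = 1 + s * Wf a s := by
  simp only [Vf, Wf, Ef]
  field_simp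
  ring

lemma Vf_pos {a s : ℝ} (ha : 0 < a) (hs : 0 < s) : 0 < Vf a s := by
  have h1 := Ef_pos ha hs
  have h2 : 0 < a * s / 5 := by positivity
  exact div_pos h1 h2


lemma alg1 (e18 e9 e6 e4 s : ℝ) (hs : s ≠ 0) (h9 : e9 ≠ 0) (h6 : e6 ≠ 0) (h4 : e4 ≠ 0) :
    125/108 * ((e18/(18*s/5)) / ((e9/(9*s/5))^2 * (e6/(6*s/5)) * (e4/(4*s/5))))
    = s^3 * (e18 / (e9^2*e6*e4)) := by
  field_simp
  ring
lemma alg2 (w18 w9 w6 w4 s : ℝ) (hs : s ≠ 0)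
    (h9 : 1 + s*w9 ≠ 0) (h6 : 1 + s*w6 ≠ 0) (h4 : 1 + s*w4 ≠ 0) :
    ((1+s*w18) / ((1+s*w9)^2 * (1+s*w6) * (1+s*w4)) - 1) / s
    = (w18 - (w9*(1+s*w9)*(1+s*w6)*(1+s*w4) + w9*(1+s*w6)*(1+s*w4)
        + w6*(1+s*w4) + w4)) / ((1+s*w9)^2 * (1+s*w6) * (1+s*w4)) := by
  field_simp
  ring


/-- The Hilbert series of the E₇ threefold `w² + x² + y³ + yz³ = 0` has Laurent
coefficients `a₀ = a₁ = 125/108` of order 3. -/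
theorem E7_threefold_hs_coeffs :
    HSLaurentCoeffs
      (fun s => (1 - Real.exp (-(18 * s / 5)))
        / ((1 - Real.exp (-(9 * s / 5))) ^ 2
           * (1 - Real.exp (-(6 * s / 5)))
           * (1 - Real.exp (-(4 * s / 5)))))
      3 (125 / 108) (125 / 108) := by
  have hV18 := tendsto_Vf (a := 18) (by norm_num)
  have hV9 := tendsto_Vf (a := 9) (by norm_num)
  have hV6 := tendsto_Vf (a := 6) (by norm_num)
  have hV4 := tendsto_Vf (a := 4) (by norm_num)
  have hW18 := tendsto_Wf (a := 18) (by norm_num)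
  have hW9 := tendsto_Wf (a := 9) (by norm_num)
  have hW6 := tendsto_Wf (a := 6) (by norm_num)
  have hW4 := tendsto_Wf (a := 4) (by norm_num)
  have hDen : Tendsto (fun s : ℝ => (Vf 9 s) ^ 2 * Vf 6 s * Vf 4 s)
      (nhdsWithin 0 (Ioi 0)) (nhds 1) := by
    have := ((hV9.pow 2).mul hV6).mul hV4
    simpa using this
  constructor
  · have key : Tendsto (fun s : ℝ =>
        125/108 * (Vf 18 s / ((Vf 9 s) ^ 2 * Vf 6 s * Vf 4 s)))
        (nhdsWithin 0 (Ioi 0)) (nhds (125/108)) := by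
      have := (hV18.div hDen (by norm_num)).const_mul (125/108 : ℝ)
      simpa using this
    refine key.congr' ?_
    filter_upwards [self_mem_nhdsWithin] with s hs
    have hs' : (0:ℝ) < s := hs
    have hs0 : s ≠ 0 := ne_of_gt hs'
    have hE18 : (1 - Real.exp (-(18 * s / 5))) ≠ 0 := by
      have := Ef_pos (a := 18) (by norm_num) hs'; simpa [Ef] using ne_of_gt this
    have hE9 : (1 - Real.exp (-(9 * s / 5))) ≠ 0 := by
      have := Ef_pos (a := 9) (by norm_num) hs'; simpa [Ef] using ne_of_gt this
    have hE6 : (1 - Real.exp (-(6 * s / 5))) ≠ 0 := by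
      have := Ef_pos (a := 6) (by norm_num) hs'; simpa [Ef] using ne_of_gt this
    have hE4 : (1 - Real.exp (-(4 * s / 5))) ≠ 0 := by
      have := Ef_pos (a := 4) (by norm_num) hs'; simpa [Ef] using ne_of_gt this
    simp only [Vf, Ef]
    exact alg1 _ _ _ _ _ hs0 hE9 hE6 hE4
  · have hN : Tendsto (fun s : ℝ => Wf 18 s -
        (Wf 9 s * Vf 9 s * Vf 6 s * Vf 4 s + Wf 9 s * Vf 6 s * Vf 4 s
          + Wf 6 s * Vf 4 s + Wf 4 s))
        (nhdsWithin 0 (Ioi 0)) (nhds 1) := by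
      have := hW18.sub ((((((hW9.mul hV9).mul hV6).mul hV4).add
        (((hW9.mul hV6).mul hV4))).add (hW6.mul hV4)).add hW4)
      convert this using 2
      norm_num
    have key : Tendsto (fun s : ℝ =>
        125/108 * ((Wf 18 s -
          (Wf 9 s * Vf 9 s * Vf 6 s * Vf 4 s + Wf 9 s * Vf 6 s * Vf 4 s
            + Wf 6 s * Vf 4 s + Wf 4 s)) / ((Vf 9 s) ^ 2 * Vf 6 s * Vf 4 s)))
        (nhdsWithin 0 (Ioi 0)) (nhds (125/108)) := by
      have := (hN.div hDen (by norm_num)).const_mul (125/108 : ℝ)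
      simpa using this
    refine key.congr' ?_
    filter_upwards [self_mem_nhdsWithin] with s hs
    have hs' : (0:ℝ) < s := hs
    have hs0 : s ≠ 0 := ne_of_gt hs'
    have hE18 : (1 - Real.exp (-(18 * s / 5))) ≠ 0 := by
      have := Ef_pos (a := 18) (by norm_num) hs'; simpa [Ef] using ne_of_gt this
    have hE9 : (1 - Real.exp (-(9 * s / 5))) ≠ 0 := by
      have := Ef_pos (a := 9) (by norm_num) hs'; simpa [Ef] using ne_of_gt this
    have hE6 : (1 - Real.exp (-(6 * s / 5))) ≠ 0 := by
      have := Ef_pos (a := 6) (by norm_num) hs'; simpa [Ef] using ne_of_gt this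
    have hE4 : (1 - Real.exp (-(4 * s / 5))) ≠ 0 := by
      have := Ef_pos (a := 4) (by norm_num) hs'; simpa [Ef] using ne_of_gt this
    have hv9 : (0:ℝ) < Vf 9 s := Vf_pos (by norm_num) hs'
    have hv6 : (0:ℝ) < Vf 6 s := Vf_pos (by norm_num) hs'
    have hv4 : (0:ℝ) < Vf 4 s := Vf_pos (by norm_num) hs'
    have hfs : s ^ 3 * ((1 - Real.exp (-(18 * s / 5)))
        / ((1 - Real.exp (-(9 * s / 5))) ^ 2
           * (1 - Real.exp (-(6 * s / 5)))
           * (1 - Real.exp (-(4 * s / 5)))))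
        = 125/108 * (Vf 18 s / ((Vf 9 s) ^ 2 * Vf 6 s * Vf 4 s)) := by
      simp only [Vf, Ef]
      exact (alg1 _ _ _ _ _ hs0 hE9 hE6 hE4).symm
    have key2 : (Vf 18 s / ((Vf 9 s) ^ 2 * Vf 6 s * Vf 4 s) - 1) / s
        = (Wf 18 s - (Wf 9 s * Vf 9 s * Vf 6 s * Vf 4 s + Wf 9 s * Vf 6 s * Vf 4 s
            + Wf 6 s * Vf 4 s + Wf 4 s)) / ((Vf 9 s) ^ 2 * Vf 6 s * Vf 4 s) := by
      have h9' : 1 + s * Wf 9 s ≠ 0 := by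
        rw [← Vf_eq (by norm_num) hs0]; exact ne_of_gt hv9
      have h6' : 1 + s * Wf 6 s ≠ 0 := by
        rw [← Vf_eq (by norm_num) hs0]; exact ne_of_gt hv6
      have h4' : 1 + s * Wf 4 s ≠ 0 := by
        rw [← Vf_eq (by norm_num) hs0]; exact ne_of_gt hv4
      rw [Vf_eq (by norm_num : (18:ℝ) ≠ 0) hs0, Vf_eq (by norm_num : (9:ℝ) ≠ 0) hs0,
        Vf_eq (by norm_num : (6:ℝ) ≠ 0) hs0, Vf_eq (by norm_num : (4:ℝ) ≠ 0) hs0]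
      exact alg2 _ _ _ _ _ hs0 h9' h6' h4'
    show _ = s ^ (3 - 1) * _
    norm_num only
    have expand : s ^ 2 * ((1 - Real.exp (-(18 * s / 5)))
        / ((1 - Real.exp (-(9 * s / 5))) ^ 2
           * (1 - Real.exp (-(6 * s / 5)))
           * (1 - Real.exp (-(4 * s / 5)))) - 125 / 108 / s ^ 3)
        = (s ^ 3 * ((1 - Real.exp (-(18 * s / 5)))
        / ((1 - Real.exp (-(9 * s / 5))) ^ 2
           * (1 - Real.exp (-(6 * s / 5)))
           * (1 - Real.exp (-(4 * s / 5))))) - 125/108) / s := by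
      generalize (1 - Real.exp (-(18 * s / 5)))
        / ((1 - Real.exp (-(9 * s / 5))) ^ 2
           * (1 - Real.exp (-(6 * s / 5)))
           * (1 - Real.exp (-(4 * s / 5)))) = F
      field_simp
    rw [expand, hfs]
    rw [show (125:ℝ)/108 * (Vf 18 s / ((Vf 9 s) ^ 2 * Vf 6 s * Vf 4 s)) - 125/108
        = 125/108 * (Vf 18 s / ((Vf 9 s) ^ 2 * Vf 6 s * Vf 4 s) - 1) by ring]
    rw [mul_div_assoc, key2]
end

section
/- The function f(s) = (1 − e^{−2s/3} + 3e^{−2s} − e^{−8s/3} + 3e^{−10s/3} − e^{−14s/3} + e^{−16s/3})/((1 − e^{−2s/3})³·(1 + e^{−2s/3} + e^{−4s/3} + e^{−2s} + e^{−8s/3})²), defined for s > 0, has Hilbert-series Laurent coefficients (a₀, a₁) of order 3 at s = 0 with a₀ = a₁ = 27/40. -/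
open Filter Real Set

lemma expTaylor (a : ℝ) :
    Tendsto (fun s => (Real.exp (-(a*s)) - 1 + a*s)/s^2) (nhdsWithin 0 (Set.Ioi 0))
      (nhds (a^2/2)) := by
  rw [← tendsto_sub_nhds_zero_iff]
  apply squeeze_zero_norm' (a := fun s : ℝ => (2/3) * |a|^3 * |s|)
  · filter_upwards [eventually_nhdsWithin_of_eventually_nhds
      (eventually_abs_sub_lt 0 (show (0:ℝ) < 1/(|a|+1) by positivity)),
      self_mem_nhdsWithin] with s hs hs'
    have hs0 : (0:ℝ) < s := hs'
    rw [sub_zero] at hs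
    have ha1 : (0:ℝ) < |a| + 1 := by positivity
    have hx : |(-(a*s))| ≤ 1 := by
      rw [abs_neg, abs_mul]
      rw [abs_lt] at hs
      have : |a| * |s| < |a| * (1/(|a|+1)) + 1 * (1/(|a|+1)) := by
        rcases abs_nonneg a |>.lt_or_eq with h | h
        · nlinarith [abs_nonneg s, hs.2, abs_of_pos hs0]
        · rw [← h]; simp
      calc |a| * |s| ≤ (|a|+1) * (1/(|a|+1)) := by nlinarith [abs_of_pos hs0]
        _ = 1 := by field_simp
    have hb := Real.exp_bound hx (n := 3) (by norm_num)
    have hsum : ∑ m ∈ Finset.range 3, (-(a*s)) ^ m / m.factorial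
        = 1 + -(a*s) + (-(a*s))^2/2 := by
      simp [Finset.sum_range_succ, Nat.factorial]
    rw [hsum] at hb
    have key : (Real.exp (-(a*s)) - 1 + a*s)/s^2 - a^2/2
        = (Real.exp (-(a*s)) - (1 + -(a*s) + (-(a*s))^2/2))/s^2 := by
      field_simp
      ring
    rw [Real.norm_eq_abs, key, abs_div, abs_of_pos (show (0:ℝ) < s^2 by positivity)]
    have h2 : |(-(a*s))|^3 * ((Nat.succ 3 : ℕ) / (((3:ℕ).factorial : ℝ) * (3:ℕ))) = (2/9) * |a|^3 * s^3 := by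
      rw [abs_neg, abs_mul, abs_of_pos hs0]
      norm_num [Nat.factorial]
      ring
    rw [h2] at hb
    rw [div_le_iff₀ (by positivity)]
    rw [abs_of_pos hs0]
    nlinarith [mul_nonneg (pow_nonneg (abs_nonneg a) 3) (pow_nonneg hs0.le 3)]
  · have : Tendsto (fun s : ℝ => (2/3) * |a|^3 * |s|) (nhdsWithin 0 (Set.Ioi 0))
        (nhds ((2/3) * |a|^3 * |0|)) :=
      Tendsto.mono_left ((continuous_const.mul continuous_abs).tendsto 0) nhdsWithin_le_nhds
    simpa using this


lemma tendsto_id0 : Tendsto (fun s : ℝ => s) (nhdsWithin 0 (Set.Ioi 0)) (nhds 0) :=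
  tendsto_id.mono_left nhdsWithin_le_nhds

lemma limE (a : ℝ) :
    Tendsto (fun s => (Real.exp (-(a*s)) - 1)/s) (nhdsWithin 0 (Set.Ioi 0)) (nhds (-a)) := by
  have h : Tendsto (fun s : ℝ => -a + s * ((Real.exp (-(a*s)) - 1 + a*s)/s^2))
      (nhdsWithin 0 (Set.Ioi 0)) (nhds (-a + 0 * (a^2/2))) :=
    tendsto_const_nhds.add (tendsto_id0.mul (expTaylor a))
  rw [zero_mul, add_zero] at h
  refine h.congr' ?_
  filter_upwards [self_mem_nhdsWithin] with s hs
  have hs0 : s ≠ 0 := ne_of_gt hs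
  field_simp
  ring

lemma limD (a : ℝ) :
    Tendsto (fun s => (1 - Real.exp (-(a*s)))/s) (nhdsWithin 0 (Set.Ioi 0)) (nhds a) := by
  have h : Tendsto (fun s : ℝ => -((Real.exp (-(a*s)) - 1)/s)) (nhdsWithin 0 (Set.Ioi 0))
      (nhds (-(-a))) := (limE a).neg
  rw [neg_neg] at h
  exact h.congr (fun s => by ring)

lemma limU (a : ℝ) (ha : a ≠ 0) :
    Tendsto (fun s => s/(1 - Real.exp (-(a*s)))) (nhdsWithin 0 (Set.Ioi 0)) (nhds (1/a)) := by
  have h := (limD a).inv₀ ha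
  rw [← one_div] at h
  exact h.congr (fun s => by rw [inv_div])

lemma limV (a : ℝ) (ha : 0 < a) :
    Tendsto (fun s => (s/(1 - Real.exp (-(a*s))) - 1/a)/s) (nhdsWithin 0 (Set.Ioi 0))
      (nhds (1/2)) := by
  have h : Tendsto (fun s => ((Real.exp (-(a*s)) - 1 + a*s)/s^2) *
      (s/(1 - Real.exp (-(a*s)))) * (1/a)) (nhdsWithin 0 (Set.Ioi 0))
      (nhds ((a^2/2) * (1/a) * (1/a))) :=
    ((expTaylor a).mul (limU a ha.ne')).mul tendsto_const_nhds
  rw [show (a^2/2) * (1/a) * (1/a) = 1/2 by field_simp] at h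
  refine h.congr' ?_
  filter_upwards [self_mem_nhdsWithin] with s hs
  have hs0 : (0:ℝ) < s := hs
  have he : Real.exp (-(a*s)) < 1 := Real.exp_lt_one_iff.mpr (by nlinarith)
  have h1 : 1 - Real.exp (-(a*s)) ≠ 0 := by linarith
  field_simp
  ring



/-- The Hilbert series of the orbifold `ℂ³/ℤ₅` with weights `(1,2,2)` has Laurent
coefficients `a₀ = a₁ = 27/40` of order 3. -/
theorem C3_Z5_orbifold_hs_coeffs :
    HSLaurentCoeffs
      (fun s => (1 - Real.exp (-(2 * s / 3)) + 3 * Real.exp (-(2 * s))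
          - Real.exp (-(8 * s / 3)) + 3 * Real.exp (-(10 * s / 3))
          - Real.exp (-(14 * s / 3)) + Real.exp (-(16 * s / 3)))
        / ((1 - Real.exp (-(2 * s / 3))) ^ 3
           * (1 + Real.exp (-(2 * s / 3)) + Real.exp (-(4 * s / 3))
              + Real.exp (-(2 * s)) + Real.exp (-(8 * s / 3))) ^ 2))
      3 (27 / 40) (27 / 40) := by
  constructor
  · -- specialized limits with matching syntax
    have hU : Tendsto (fun s => s/(1 - Real.exp (-(2 * s / 3)))) (nhdsWithin 0 (Set.Ioi 0))
        (nhds (3/2)) := by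
      have h := limU (2/3) (by norm_num)
      rw [show (1:ℝ)/(2/3) = 3/2 by norm_num] at h
      exact h.congr (fun s => by rw [show -(2/3*s) = -(2*s/3) by ring])
    have hW : Tendsto (fun s => s/(1 - Real.exp (-(10 * s / 3)))) (nhdsWithin 0 (Set.Ioi 0))
        (nhds (3/10)) := by
      have h := limU (10/3) (by norm_num)
      rw [show (1:ℝ)/(10/3) = 3/10 by norm_num] at h
      exact h.congr (fun s => by rw [show -(10/3*s) = -(10*s/3) by ring])
    have hN : Tendsto (fun s => 1 - Real.exp (-(2 * s / 3)) + 3 * Real.exp (-(2 * s))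
        - Real.exp (-(8 * s / 3)) + 3 * Real.exp (-(10 * s / 3))
        - Real.exp (-(14 * s / 3)) + Real.exp (-(16 * s / 3))) (nhdsWithin 0 (Set.Ioi 0))
        (nhds 5) := by
      have hc : Continuous (fun s : ℝ => 1 - Real.exp (-(2 * s / 3)) + 3 * Real.exp (-(2 * s))
          - Real.exp (-(8 * s / 3)) + 3 * Real.exp (-(10 * s / 3))
          - Real.exp (-(14 * s / 3)) + Real.exp (-(16 * s / 3))) := by continuity
      have h0 := (hc.tendsto 0).mono_left (nhdsWithin_le_nhds (s := Set.Ioi 0))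
      convert h0 using 2
      norm_num
    have h := (hN.mul hU).mul (hW.pow 2)
    rw [show (5 * (3/2) * (3/10)^2 : ℝ) = 27/40 by norm_num] at h
    refine Tendsto.congr' ?_ h
    filter_upwards [self_mem_nhdsWithin] with s hs
    have hs0 : (0:ℝ) < s := hs
    set x := Real.exp (-(2 * s / 3)) with hxdef
    have hx0 : (0:ℝ) < x := Real.exp_pos _
    have hx1 : x < 1 := Real.exp_lt_one_iff.mpr (by nlinarith)
    have e3 : Real.exp (-(2 * s)) = x ^ 3 := by
      rw [hxdef, ← Real.exp_nat_mul]; congr 1; push_cast; ring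
    have e2 : Real.exp (-(4 * s / 3)) = x ^ 2 := by
      rw [hxdef, ← Real.exp_nat_mul]; congr 1; push_cast; ring
    have e4 : Real.exp (-(8 * s / 3)) = x ^ 4 := by
      rw [hxdef, ← Real.exp_nat_mul]; congr 1; push_cast; ring
    have e5 : Real.exp (-(10 * s / 3)) = x ^ 5 := by
      rw [hxdef, ← Real.exp_nat_mul]; congr 1; push_cast; ring
    have e7 : Real.exp (-(14 * s / 3)) = x ^ 7 := by
      rw [hxdef, ← Real.exp_nat_mul]; congr 1; push_cast; ring
    have e8 : Real.exp (-(16 * s / 3)) = x ^ 8 := by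
      rw [hxdef, ← Real.exp_nat_mul]; congr 1; push_cast; ring
    rw [e3, e2, e4, e5, e7, e8]
    have d1 : (1:ℝ) - x ≠ 0 := by linarith
    have d5 : (1:ℝ) - x ^ 5 ≠ 0 := by
      have : x ^ 5 < 1 := pow_lt_one₀ hx0.le hx1 (by norm_num)
      linarith
    have dq : (1:ℝ) + x + x^2 + x^3 + x^4 ≠ 0 := by positivity
    field_simp
    ring
  · have hU : Tendsto (fun s => s/(1 - Real.exp (-(2 * s / 3)))) (nhdsWithin 0 (Set.Ioi 0))
        (nhds (3/2)) := by
      have h := limU (2/3) (by norm_num)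
      rw [show (1:ℝ)/(2/3) = 3/2 by norm_num] at h
      exact h.congr (fun s => by rw [show -(2/3*s) = -(2*s/3) by ring])
    have hW : Tendsto (fun s => s/(1 - Real.exp (-(10 * s / 3)))) (nhdsWithin 0 (Set.Ioi 0))
        (nhds (3/10)) := by
      have h := limU (10/3) (by norm_num)
      rw [show (1:ℝ)/(10/3) = 3/10 by norm_num] at h
      exact h.congr (fun s => by rw [show -(10/3*s) = -(10*s/3) by ring])
    have E1 : Tendsto (fun s => (Real.exp (-(2 * s / 3)) - 1)/s) (nhdsWithin 0 (Set.Ioi 0))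
        (nhds (-(2/3))) :=
      (limE (2/3)).congr (fun s => by rw [show -(2/3*s) = -(2*s/3) by ring])
    have E3 : Tendsto (fun s => (Real.exp (-(2 * s)) - 1)/s) (nhdsWithin 0 (Set.Ioi 0))
        (nhds (-2)) := limE 2
    have E4 : Tendsto (fun s => (Real.exp (-(8 * s / 3)) - 1)/s) (nhdsWithin 0 (Set.Ioi 0))
        (nhds (-(8/3))) :=
      (limE (8/3)).congr (fun s => by rw [show -(8/3*s) = -(8*s/3) by ring])
    have E5 : Tendsto (fun s => (Real.exp (-(10 * s / 3)) - 1)/s) (nhdsWithin 0 (Set.Ioi 0))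
        (nhds (-(10/3))) :=
      (limE (10/3)).congr (fun s => by rw [show -(10/3*s) = -(10*s/3) by ring])
    have E7 : Tendsto (fun s => (Real.exp (-(14 * s / 3)) - 1)/s) (nhdsWithin 0 (Set.Ioi 0))
        (nhds (-(14/3))) :=
      (limE (14/3)).congr (fun s => by rw [show -(14/3*s) = -(14*s/3) by ring])
    have E8 : Tendsto (fun s => (Real.exp (-(16 * s / 3)) - 1)/s) (nhdsWithin 0 (Set.Ioi 0))
        (nhds (-(16/3))) :=
      (limE (16/3)).congr (fun s => by rw [show -(16/3*s) = -(16*s/3) by ring])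
    have hN' : Tendsto (fun s => ((1 - Real.exp (-(2 * s / 3)) + 3 * Real.exp (-(2 * s))
        - Real.exp (-(8 * s / 3)) + 3 * Real.exp (-(10 * s / 3))
        - Real.exp (-(14 * s / 3)) + Real.exp (-(16 * s / 3))) - 5)/s)
        (nhdsWithin 0 (Set.Ioi 0)) (nhds (-(40/3))) := by
      have h := (((((E1.neg.add (E3.const_mul 3)).sub E4).add (E5.const_mul 3)).sub E7).add E8)
      rw [show (((((-(-(2/3)) + 3 * (-2)) - (-(8/3))) + 3 * (-(10/3))) - (-(14/3))) + (-(16/3)) : ℝ)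
        = -(40/3) by norm_num] at h
      exact h.congr (fun s => by ring)
    have hU' : Tendsto (fun s => (s/(1 - Real.exp (-(2 * s / 3))) - 3/2)/s)
        (nhdsWithin 0 (Set.Ioi 0)) (nhds (1/2)) := by
      have h := limV (2/3) (by norm_num)
      rw [show (1:ℝ)/(2/3) = 3/2 by norm_num] at h
      exact h.congr (fun s => by rw [show -(2/3*s) = -(2*s/3) by ring])
    have hW' : Tendsto (fun s => (s/(1 - Real.exp (-(10 * s / 3))) - 3/10)/s)
        (nhdsWithin 0 (Set.Ioi 0)) (nhds (1/2)) := by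
      have h := limV (10/3) (by norm_num)
      rw [show (1:ℝ)/(10/3) = 3/10 by norm_num] at h
      exact h.congr (fun s => by rw [show -(10/3*s) = -(10*s/3) by ring])
    have h := ((hN'.mul hU).mul (hW.pow 2)).add
      (((hU'.const_mul 5).mul (hW.pow 2)).add
        ((hW'.const_mul (15/2)).mul (hW.add (tendsto_const_nhds (x := (3/10 : ℝ))))))
    rw [show (-(40/3) * (3/2) * (3/10)^2 + (5 * (1/2) * (3/10)^2
        + (15/2) * (1/2) * (3/10 + 3/10)) : ℝ) = 27/40 by norm_num] at h
    refine Tendsto.congr' ?_ h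
    filter_upwards [self_mem_nhdsWithin] with s hs
    have hs0 : (0:ℝ) < s := hs
    set x := Real.exp (-(2 * s / 3)) with hxdef
    have hx0 : (0:ℝ) < x := Real.exp_pos _
    have hx1 : x < 1 := Real.exp_lt_one_iff.mpr (by nlinarith)
    have e3 : Real.exp (-(2 * s)) = x ^ 3 := by
      rw [hxdef, ← Real.exp_nat_mul]; congr 1; push_cast; ring
    have e2 : Real.exp (-(4 * s / 3)) = x ^ 2 := by
      rw [hxdef, ← Real.exp_nat_mul]; congr 1; push_cast; ring
    have e4 : Real.exp (-(8 * s / 3)) = x ^ 4 := by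
      rw [hxdef, ← Real.exp_nat_mul]; congr 1; push_cast; ring
    have e5 : Real.exp (-(10 * s / 3)) = x ^ 5 := by
      rw [hxdef, ← Real.exp_nat_mul]; congr 1; push_cast; ring
    have e7 : Real.exp (-(14 * s / 3)) = x ^ 7 := by
      rw [hxdef, ← Real.exp_nat_mul]; congr 1; push_cast; ring
    have e8 : Real.exp (-(16 * s / 3)) = x ^ 8 := by
      rw [hxdef, ← Real.exp_nat_mul]; congr 1; push_cast; ring
    rw [e3, e2, e4, e5, e7, e8]
    have d1 : (1:ℝ) - x ≠ 0 := by linarith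
    have d5 : (1:ℝ) - x ^ 5 ≠ 0 := by
      have : x ^ 5 < 1 := pow_lt_one₀ hx0.le hx1 (by norm_num)
      linarith
    have dq : (1:ℝ) + x + x^2 + x^3 + x^4 ≠ 0 := by positivity
    have hs0' : s ≠ 0 := hs0.ne'
    field_simp
    ring
end
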